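/- Let φ : [0,2] → ℝ be twice continuously differentiable and let k ∈ (1,2) be such that φ''(t) < 0 for t ∈ [0,k) and φ''(t) > 0 for t ∈ (k,2], and suppose φ(2) − φ(1) ≤ φ'(1). Then for every doubly stochastic measure π on [0,1]², ∫ φ(x+y) dπ(x,y) ≤ φ(1); moreover the pushforward of Lebesgue measure on [0,1] under x ↦ (x, 1−x) is a doubly stochastic measure attaining this bound, since ∫₀¹ φ(x + (1−x)) dx = φ(1). -/

import Mathlib

open MeasureTheory Set

/-- A doubly stochastic measure on `[0,1]²`. -/
def IsDoublyStochastic (π : Measure (ℝ × ℝ)) : Prop :=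
  IsProbabilityMeasure π ∧
  (∀ B : Set ℝ, MeasurableSet B → B ⊆ Icc 0 1 → π (B ×ˢ Icc (0:ℝ) 1) = volume B) ∧
  (∀ B : Set ℝ, MeasurableSet B → B ⊆ Icc 0 1 → π (Icc (0:ℝ) 1 ×ˢ B) = volume B)

/-!
Since `φ` is concave on `[0, k]` and `1 < k`, the tangent line `ℓ t = φ 1 + φ' 1 * (t - 1)` lies
above `φ` on `[0, k]`; on `[k, 2]` the difference `φ - ℓ` is convex, so it is bounded by its values
at `k` (nonpositive by concavity) and at `2` (nonpositive by `φ 2 - φ 1 ≤ φ' 1`). Hence `φ ≤ ℓ` on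
`[0, 2]`. Both marginals of a doubly stochastic measure are uniform on `[0, 1]`, so `x + y` has mean
`1` under `π`, and integrating the affine bound gives `∫ φ (x + y) dπ ≤ ℓ 1 = φ 1`.
-/

section Tangent

variable {f : ℝ → ℝ}

lemma ConcaveOn.le_tangent_of_hasDerivWithinAt {S : Set ℝ} {a x f' : ℝ} (hf : ConcaveOn ℝ S f)
    (ha : a ∈ S) (hx : x ∈ S) (hf' : HasDerivWithinAt f f' S a) :
    f x ≤ f a + f' * (x - a) := by
  rcases lt_trichotomy x a with hxa | rfl | hax
  · have hslope := hf.le_slope_of_hasDerivWithinAt hx ha hxa hf'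
    rw [slope_def_field, le_div_iff₀ (sub_pos.2 hxa)] at hslope
    linarith
  · simp
  · have hslope := hf.slope_le_of_hasDerivWithinAt ha hx hax hf'
    rw [slope_def_field, div_le_iff₀ (sub_pos.2 hax)] at hslope
    linarith

lemma concaveOn_affine {S : Set ℝ} (hS : Convex ℝ S) (y m x₀ : ℝ) :
    ConcaveOn ℝ S (fun t => y + m * (t - x₀)) :=
  ((LinearMap.mul ℝ ℝ m).concaveOn hS).add_const (y - m * x₀) |>.congr fun t _ => by
    simp only [Pi.add_apply, LinearMap.mul_apply']
    ring

lemma le_tangent_of_concaveOn_of_convexOn {a b c x₀ f' : ℝ}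
    (hconc : ConcaveOn ℝ (Icc a b) f) (hconv : ConvexOn ℝ (Icc b c) f)
    (hx₀ : x₀ ∈ Icc a b) (hf' : HasDerivWithinAt f f' (Icc a b) x₀)
    (hc : f c ≤ f x₀ + f' * (c - x₀)) :
    ∀ x ∈ Icc a c, f x ≤ f x₀ + f' * (x - x₀) := by
  have hb : b ∈ Icc a b := ⟨hx₀.1.trans hx₀.2, le_rfl⟩
  intro x hx
  rcases le_or_gt x b with hxb | hbx
  · exact hconc.le_tangent_of_hasDerivWithinAt hx₀ ⟨hx.1, hxb⟩ hf'
  set g := f - fun t => f x₀ + f' * (t - x₀)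
  have hg : ConvexOn ℝ (Icc b c) g := hconv.sub (concaveOn_affine (convex_Icc b c) _ _ _)
  have hgb : g b ≤ 0 := by
    simpa [g] using hconc.le_tangent_of_hasDerivWithinAt hx₀ hb hf'
  have hgc : g c ≤ 0 := by simpa [g] using hc
  have hgx := hg.le_max_of_mem_Icc ⟨le_rfl, hbx.le.trans hx.2⟩ ⟨hbx.le.trans hx.2, le_rfl⟩
    ⟨hbx.le, hx.2⟩
  simpa [g] using hgx.trans (max_le hgb hgc)

end Tangent

section SecondDerivative

variable {f f' f'' : ℝ → ℝ} {s : Set ℝ} {a b : ℝ}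

lemma concaveOn_Icc_of_hasDerivWithinAt2_nonpos (hs : Icc a b ⊆ s)
    (hf : ∀ x ∈ s, HasDerivWithinAt f (f' x) s x) (hf' : ∀ x ∈ s, HasDerivWithinAt f' (f'' x) s x)
    (hf'' : ∀ x ∈ Ioo a b, f'' x ≤ 0) : ConcaveOn ℝ (Icc a b) f := by
  have hIoo : Ioo a b ⊆ s := Ioo_subset_Icc_self.trans hs
  refine concaveOn_of_hasDerivWithinAt2_nonpos (f' := f') (f'' := f'') (convex_Icc a b)
    (fun x hx => ((hf x (hs hx)).continuousWithinAt).mono hs) ?_ ?_ ?_ <;> rw [interior_Icc]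
  · exact fun x hx => (hf x (hIoo hx)).mono hIoo
  · exact fun x hx => (hf' x (hIoo hx)).mono hIoo
  · exact hf''

lemma convexOn_Icc_of_hasDerivWithinAt2_nonneg (hs : Icc a b ⊆ s)
    (hf : ∀ x ∈ s, HasDerivWithinAt f (f' x) s x) (hf' : ∀ x ∈ s, HasDerivWithinAt f' (f'' x) s x)
    (hf'' : ∀ x ∈ Ioo a b, 0 ≤ f'' x) : ConvexOn ℝ (Icc a b) f := by
  have hIoo : Ioo a b ⊆ s := Ioo_subset_Icc_self.trans hs
  refine convexOn_of_hasDerivWithinAt2_nonneg (f' := f') (f'' := f'') (convex_Icc a b)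
    (fun x hx => ((hf x (hs hx)).continuousWithinAt).mono hs) ?_ ?_ ?_ <;> rw [interior_Icc]
  · exact fun x hx => (hf x (hIoo hx)).mono hIoo
  · exact fun x hx => (hf' x (hIoo hx)).mono hIoo
  · exact hf''

end SecondDerivative

namespace IsDoublyStochastic

variable {π : Measure (ℝ × ℝ)}

lemma ae_mem_Icc_prod_Icc (hπ : IsDoublyStochastic π) :
    ∀ᵐ p ∂π, p ∈ Icc (0:ℝ) 1 ×ˢ Icc (0:ℝ) 1 := by
  have := hπ.1
  have hS : π (Icc 0 1 ×ˢ Icc 0 1) = 1 := by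
    rw [hπ.2.1 _ measurableSet_Icc subset_rfl]
    simp
  exact (prob_compl_eq_zero_iff (measurableSet_Icc.prod measurableSet_Icc)).2 hS

lemma map_fst (hπ : IsDoublyStochastic π) : π.map Prod.fst = volume.restrict (Icc 0 1) := by
  ext s hs
  rw [Measure.map_apply measurable_fst hs, Measure.restrict_apply hs,
    ← Measure.restrict_eq_self_of_ae_mem hπ.ae_mem_Icc_prod_Icc,
    Measure.restrict_apply (measurable_fst hs), ← prod_univ, prod_inter_prod, univ_inter,
    hπ.2.1 _ (hs.inter measurableSet_Icc) inter_subset_right]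

lemma map_snd (hπ : IsDoublyStochastic π) : π.map Prod.snd = volume.restrict (Icc 0 1) := by
  ext s hs
  rw [Measure.map_apply measurable_snd hs, Measure.restrict_apply hs,
    ← Measure.restrict_eq_self_of_ae_mem hπ.ae_mem_Icc_prod_Icc,
    Measure.restrict_apply (measurable_snd hs), ← univ_prod, prod_inter_prod, univ_inter,
    hπ.2.2 _ (hs.inter measurableSet_Icc) inter_subset_right]

lemma integrable_of_continuousOn (hπ : IsDoublyStochastic π) {E : Type*} [NormedAddCommGroup E]
    {f : ℝ × ℝ → E} (hf : ContinuousOn f (Icc 0 1 ×ˢ Icc 0 1)) : Integrable f π := by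
  have := hπ.1
  rw [← Measure.restrict_eq_self_of_ae_mem hπ.ae_mem_Icc_prod_Icc]
  exact hf.integrableOn_compact (isCompact_Icc.prod isCompact_Icc)

lemma integral_fst_add_snd (hπ : IsDoublyStochastic π) : ∫ p, (p.1 + p.2) ∂π = 1 := by
  have hmean : ∫ x in Icc (0:ℝ) 1, x = 1 / 2 := by
    rw [integral_Icc_eq_integral_Ioc, ← intervalIntegral.integral_of_le zero_le_one, integral_id]
    norm_num
  have hfst : ∫ p, p.1 ∂π = 1 / 2 := by
    rw [← hmean, ← hπ.map_fst, integral_map measurable_fst.aemeasurable (f := fun x : ℝ => x)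
      aestronglyMeasurable_id]
  have hsnd : ∫ p, p.2 ∂π = 1 / 2 := by
    rw [← hmean, ← hπ.map_snd, integral_map measurable_snd.aemeasurable (f := fun x : ℝ => x)
      aestronglyMeasurable_id]
  rw [integral_add (hπ.integrable_of_continuousOn continuous_fst.continuousOn)
    (hπ.integrable_of_continuousOn continuous_snd.continuousOn), hfst, hsnd]
  norm_num

lemma integral_le_of_le_affine (hπ : IsDoublyStochastic π) {φ : ℝ → ℝ} {c m : ℝ}
    (hφ : ContinuousOn φ (Icc 0 2)) (hle : ∀ t ∈ Icc (0:ℝ) 2, φ t ≤ c + m * (t - 1)) :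
    ∫ p, φ (p.1 + p.2) ∂π ≤ c := by
  have := hπ.1
  have hsum : MapsTo (fun p : ℝ × ℝ => p.1 + p.2) (Icc 0 1 ×ˢ Icc 0 1) (Icc 0 2) :=
    fun p ⟨hx, hy⟩ => ⟨add_nonneg hx.1 hy.1, by linarith [hx.2, hy.2]⟩
  have hint : Integrable (fun p : ℝ × ℝ => p.1 + p.2) π :=
    hπ.integrable_of_continuousOn continuous_add.continuousOn
  have hint' : Integrable (fun p : ℝ × ℝ => m * ((p.1 + p.2) - 1)) π :=
    (hint.sub (integrable_const 1)).const_mul m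
  calc ∫ p, φ (p.1 + p.2) ∂π ≤ ∫ p, (c + m * ((p.1 + p.2) - 1)) ∂π :=
        integral_mono_ae (hπ.integrable_of_continuousOn (hφ.comp continuous_add.continuousOn hsum))
          ((integrable_const c).add hint')
          (hπ.ae_mem_Icc_prod_Icc.mono fun p hp => hle _ (hsum hp))
    _ = c := by
        rw [integral_add (integrable_const c) hint',
          integral_const_mul, integral_sub hint (integrable_const 1), hπ.integral_fst_add_snd]
        simp

end IsDoublyStochastic

lemma isDoublyStochastic_map_antidiagonal :
    IsDoublyStochastic (Measure.map (fun x => (x, 1 - x)) (volume.restrict (Icc (0:ℝ) 1))) := by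
  have hf : Measurable fun x : ℝ => (x, 1 - x) := by fun_prop
  have hrefl : (fun x : ℝ => 1 - x) ⁻¹' Icc 0 1 = Icc 0 1 := by
    ext x
    simp only [mem_preimage, mem_Icc]
    constructor <;> rintro ⟨h₀, h₁⟩ <;> constructor <;> linarith
  refine ⟨⟨?_⟩, fun B hB hB01 => ?_, fun B hB hB01 => ?_⟩
  · rw [Measure.map_apply hf MeasurableSet.univ]
    simp
  · rw [Measure.map_apply hf (hB.prod measurableSet_Icc), Measure.restrict_apply' measurableSet_Icc,
      mk_preimage_prod, preimage_id', hrefl, inter_assoc, inter_self, inter_eq_left.2 hB01]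
  · have hB' : (fun x : ℝ => 1 - x) ⁻¹' B ⊆ Icc 0 1 := hrefl ▸ preimage_mono hB01
    rw [Measure.map_apply hf (measurableSet_Icc.prod hB), Measure.restrict_apply' measurableSet_Icc,
      mk_preimage_prod, preimage_id', inter_right_comm, inter_self, inter_eq_right.2 hB']
    exact (Measure.measurePreserving_sub_left volume 1).measure_preimage hB.nullMeasurableSet

theorem stmt17_general (φ φ' φ'' : ℝ → ℝ)
    (hd1 : ∀ t ∈ Icc (0:ℝ) 2, HasDerivWithinAt φ (φ' t) (Icc 0 2) t)
    (hd2 : ∀ t ∈ Icc (0:ℝ) 2, HasDerivWithinAt φ' (φ'' t) (Icc 0 2) t)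
    (k : ℝ) (hk : k ∈ Ioo (1:ℝ) 2)
    (hconc : ∀ t ∈ Ico (0:ℝ) k, φ'' t < 0)
    (hconv : ∀ t ∈ Ioc k 2, 0 < φ'' t)
    (hβ : φ 2 - φ 1 ≤ φ' 1) :
    (∀ π : Measure (ℝ × ℝ), IsDoublyStochastic π →
      ∫ p, φ (p.1 + p.2) ∂π ≤ φ 1) ∧
    IsDoublyStochastic
      (Measure.map (fun x => (x, 1 - x)) (volume.restrict (Icc (0:ℝ) 1))) ∧
    ∫ x in (0:ℝ)..1, φ (x + (1 - x)) = φ 1 := by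
  have hconcave : ConcaveOn ℝ (Icc 0 k) φ :=
    concaveOn_Icc_of_hasDerivWithinAt2_nonpos (Icc_subset_Icc_right hk.2.le) hd1 hd2
      fun t ht => (hconc t ⟨ht.1.le, ht.2⟩).le
  have hconvex : ConvexOn ℝ (Icc k 2) φ :=
    convexOn_Icc_of_hasDerivWithinAt2_nonneg (Icc_subset_Icc_left (by linarith [hk.1])) hd1 hd2
      fun t ht => (hconv t ⟨ht.1, ht.2.le⟩).le
  have htangent : ∀ t ∈ Icc (0:ℝ) 2, φ t ≤ φ 1 + φ' 1 * (t - 1) :=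
    le_tangent_of_concaveOn_of_convexOn hconcave hconvex ⟨zero_le_one, hk.1.le⟩
      ((hd1 1 ⟨zero_le_one, one_le_two⟩).mono (Icc_subset_Icc_right hk.2.le)) (by linarith)
  have hφ : ContinuousOn φ (Icc 0 2) := fun t ht => (hd1 t ht).continuousWithinAt
  refine ⟨fun π hπ => hπ.integral_le_of_le_affine hφ htangent,
    isDoublyStochastic_map_antidiagonal, ?_⟩
  simp

theorem stmt17 (φ φ' φ'' : ℝ → ℝ)
    (hd1 : ∀ t ∈ Icc (0:ℝ) 2, HasDerivWithinAt φ (φ' t) (Icc 0 2) t)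
    (hd2 : ∀ t ∈ Icc (0:ℝ) 2, HasDerivWithinAt φ' (φ'' t) (Icc 0 2) t)
    (hc : ContinuousOn φ'' (Icc (0:ℝ) 2))
    (k : ℝ) (hk : k ∈ Ioo (1:ℝ) 2)
    (hconc : ∀ t ∈ Ico (0:ℝ) k, φ'' t < 0)
    (hconv : ∀ t ∈ Ioc k 2, 0 < φ'' t)
    (hβ : φ 2 - φ 1 ≤ φ' 1) :
    (∀ π : Measure (ℝ × ℝ), IsDoublyStochastic π →
      ∫ p, φ (p.1 + p.2) ∂π ≤ φ 1) ∧
    IsDoublyStochastic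
      (Measure.map (fun x => (x, 1 - x)) (volume.restrict (Icc (0:ℝ) 1))) ∧
    ∫ x in (0:ℝ)..1, φ (x + (1 - x)) = φ 1 :=
  stmt17_general φ φ' φ'' hd1 hd2 k hk hconc hconv hβ
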